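/- The set of n×n permutation matrices is exactly the set of extreme points of the Birkhoff polytope B_n of doubly stochastic matrices. -/

import Mathlib

/-- The set of n×n doubly stochastic matrices (Birkhoff polytope). -/
def doublyStochasticSet (n : ℕ) : Set (Matrix (Fin n) (Fin n) ℝ) :=
  {B | (∀ i j, 0 ≤ B i j) ∧ (∀ i, ∑ j, B i j = 1) ∧ (∀ j, ∑ i, B i j = 1)}

lemma doublyStochasticSet_eq_doublyStochastic (n : ℕ) :
    doublyStochasticSet n = doublyStochastic ℝ (Fin n) := by
  ext M
  simp [doublyStochasticSet, mem_doublyStochastic_iff_sum]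

lemma Equiv.Perm.of_ite_apply_eq_eq_permMatrix_inv {ι R : Type*} [DecidableEq ι] [Zero R] [One R]
    (σ : Equiv.Perm ι) :
    Matrix.of (fun i j => if σ j = i then (1 : R) else 0) = σ⁻¹.permMatrix R := by
  ext i j
  simp [PEquiv.toMatrix_apply, Equiv.symm_apply_eq, eq_comm (a := i)]

/-- the extreme points of the Birkhoff polytope are exactly the
permutation matrices. -/
theorem extremePoints_birkhoff_eq_permMatrices (n : ℕ) :
    Set.extremePoints ℝ (doublyStochasticSet n) =
      {P | ∃ σ : Equiv.Perm (Fin n),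
        P = Matrix.of fun i j => if σ j = i then (1:ℝ) else 0} := by
  rw [doublyStochasticSet_eq_doublyStochastic, extremePoints_doublyStochastic]
  ext P
  simp only [Set.mem_ofPred_eq, Equiv.Perm.of_ite_apply_eq_eq_permMatrix_inv]
  exact ⟨fun ⟨σ, hσ⟩ => ⟨σ⁻¹, by rw [inv_inv, hσ]⟩, fun ⟨σ, hσ⟩ => ⟨σ⁻¹, hσ.symm⟩⟩
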